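/- In the ski rental problem, the algorithm that buys on day ⌈λb⌉ whenever the prediction exceeds b satisfies: if the prediction is correct (η = 0), its cost is at most (1 + λ)·OPT; and regardless of prediction quality its cost is at most (1 + 1/λ)·OPT. -/

import Mathlib

/-!
For a fixed buying day `k` the adversary's best reply is to stop skiing on day `k`, which
costs `k - 1 + b`. For `k = ⌈λb⌉` this is `< λb + b` while `OPT ≥ k ≥ λb`; for `k = ⌈b/λ⌉`
it is `< b/λ + b` while `OPT = b`: both give the ratio `1 + 1/λ`. With a correct prediction
`h = d`, either `d > b` and the early purchase costs `< (1 + λ)b`, or `d ≤ b ≤ ⌈b/λ⌉` and the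
algorithm rents throughout, except when `λ = 1` and `d = b = k`.
-/

/-- The day on which the λ-robust ski rental algorithm buys:
day `⌈λb⌉` if the prediction `h` exceeds `b`, day `⌈b/λ⌉` otherwise. -/
noncomputable def buyDay (lam : ℝ) (b h : ℕ) : ℕ :=
  if b < h then ⌈lam * b⌉₊ else ⌈(b : ℝ) / lam⌉₊

/-- Total cost of an algorithm that buys on day `k` when the true number of
ski days is `d`. -/
def skiCost (k b d : ℕ) : ℕ := if k ≤ d then (k - 1) + b else d

section SkiCost

variable {k b d : ℕ}

theorem skiCost_of_le (h : k ≤ d) : skiCost k b d = k - 1 + b := if_pos h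

theorem skiCost_of_lt (h : d < k) : skiCost k b d = d := if_neg h.not_ge

theorem skiCost_eq_skiCost_self (h : k ≤ d) : skiCost k b d = skiCost k b k := by
  rw [skiCost_of_le h, skiCost_of_le le_rfl]

theorem skiCost_le_mul_min {c : ℝ} (hc : 1 ≤ c)
    (hk : (skiCost k b k : ℝ) ≤ c * (min k b : ℕ)) :
    (skiCost k b d : ℝ) ≤ c * (min d b : ℕ) := by
  rcases le_or_gt k d with hkd | hdk
  · rw [skiCost_eq_skiCost_self hkd]
    exact hk.trans (by gcongr)
  · rw [skiCost_of_lt hdk]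
    rcases le_total d b with hdb | hbd
    · rw [min_eq_left hdb]
      nlinarith [(Nat.cast_nonneg d : (0 : ℝ) ≤ d)]
    · rw [min_eq_right hbd]
      rw [skiCost_of_le le_rfl, min_eq_right (hbd.trans hdk.le)] at hk
      calc (d : ℝ) ≤ ((k - 1 + b : ℕ) : ℝ) := by exact_mod_cast (by omega : d ≤ k - 1 + b)
        _ ≤ c * b := hk

theorem skiCost_ceil_self_lt {x : ℝ} (hx : 0 < x) :
    (skiCost ⌈x⌉₊ b ⌈x⌉₊ : ℝ) < x + b := by
  have hk : 1 ≤ ⌈x⌉₊ := Nat.one_le_ceil_iff.mpr hx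
  rw [skiCost_of_le le_rfl]
  push_cast [Nat.cast_sub hk]
  linarith [Nat.ceil_lt_add_one hx.le]

end SkiCost

section LambdaAlgorithm

variable {lam : ℝ} {b d : ℕ}

theorem ceil_mul_le_of_le_one (hlam1 : lam ≤ 1) : ⌈lam * b⌉₊ ≤ b :=
  Nat.ceil_le.mpr (mul_le_of_le_one_left (Nat.cast_nonneg b) hlam1)

theorem le_ceil_div_of_le_one (hlam0 : 0 < lam) (hlam1 : lam ≤ 1) : b ≤ ⌈(b : ℝ) / lam⌉₊ :=
  Nat.cast_le.mp ((le_div_self (Nat.cast_nonneg b) hlam0 hlam1).trans (Nat.le_ceil _))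

theorem skiCost_ceil_mul_le (hlam0 : 0 < lam) (hlam1 : lam ≤ 1) (hb : 1 ≤ b) :
    (skiCost ⌈lam * b⌉₊ b d : ℝ) ≤ (1 + 1 / lam) * (min d b : ℕ) := by
  have hkb : ⌈lam * b⌉₊ ≤ b := ceil_mul_le_of_le_one hlam1
  refine skiCost_le_mul_min (by simp [hlam0.le]) ?_
  rw [min_eq_left hkb]
  calc (skiCost ⌈lam * b⌉₊ b ⌈lam * b⌉₊ : ℝ) ≤ lam * b + b :=
        (skiCost_ceil_self_lt (by positivity)).le
    _ = (1 + 1 / lam) * (lam * b) := by field_simp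
    _ ≤ (1 + 1 / lam) * ⌈lam * b⌉₊ := by gcongr; exact Nat.le_ceil _

theorem skiCost_ceil_div_le (hlam0 : 0 < lam) (hlam1 : lam ≤ 1) (hb : 1 ≤ b) :
    (skiCost ⌈(b : ℝ) / lam⌉₊ b d : ℝ) ≤ (1 + 1 / lam) * (min d b : ℕ) := by
  have hbk : b ≤ ⌈(b : ℝ) / lam⌉₊ := le_ceil_div_of_le_one hlam0 hlam1
  refine skiCost_le_mul_min (by simp [hlam0.le]) ?_
  rw [min_eq_right hbk]
  calc (skiCost ⌈(b : ℝ) / lam⌉₊ b ⌈(b : ℝ) / lam⌉₊ : ℝ) ≤ b / lam + b :=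
        (skiCost_ceil_self_lt (by positivity)).le
    _ = (1 + 1 / lam) * b := by ring

theorem skiCost_ceil_mul_le_of_lt (hlam0 : 0 < lam) (hlam1 : lam ≤ 1) (hb : 1 ≤ b)
    (hbd : b < d) : (skiCost ⌈lam * b⌉₊ b d : ℝ) ≤ (1 + lam) * b := by
  have hkb : ⌈lam * b⌉₊ ≤ b := ceil_mul_le_of_le_one hlam1
  rw [skiCost_eq_skiCost_self (hkb.trans hbd.le)]
  linarith [skiCost_ceil_self_lt (b := b) (by positivity : 0 < lam * b)]

theorem skiCost_ceil_div_le_of_le (hlam0 : 0 < lam) (hlam1 : lam ≤ 1) (hdb : d ≤ b) :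
    (skiCost ⌈(b : ℝ) / lam⌉₊ b d : ℝ) ≤ (1 + lam) * d := by
  set k := ⌈(b : ℝ) / lam⌉₊
  rcases le_or_gt k d with hkd | hdk
  · -- `b ≤ b / λ ≤ k ≤ d ≤ b` forces `k = d = b` and then `b ≤ λ b`.
    have hbk : b ≤ k := le_ceil_div_of_le_one hlam0 hlam1
    have hkb : k = b := by omega
    have hlamb : (b : ℝ) ≤ lam * b := by
      have := (Nat.ceil_le.mp hkb.le : (b : ℝ) / lam ≤ b)
      rwa [div_le_iff₀ hlam0, mul_comm] at this
    rw [skiCost_of_le hkd, show d = b by omega]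
    calc ((k - 1 + b : ℕ) : ℝ) ≤ k + b := by exact_mod_cast (by omega : k - 1 + b ≤ k + b)
      _ ≤ (1 + lam) * b := by rw [hkb]; linarith
  · rw [skiCost_of_lt hdk]
    exact le_mul_of_one_le_left (Nat.cast_nonneg d) (by linarith)

end LambdaAlgorithm

/-- Consistency and robustness of the λ ski rental algorithm: if the
prediction is correct (`η = 0`, i.e. `h = d`) its cost is at most
`(1 + λ)·OPT`, and regardless of prediction quality its cost is at most
`(1 + 1/λ)·OPT`, where `OPT = min d b`. -/
theorem ski_rental_consistency_robustness (lam : ℝ) (hlam0 : 0 < lam)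
    (hlam1 : lam ≤ 1) (b d h : ℕ) (hb : 1 ≤ b) :
    (h = d → (skiCost (buyDay lam b h) b d : ℝ) ≤ (1 + lam) * (min d b : ℕ)) ∧
      (skiCost (buyDay lam b h) b d : ℝ) ≤ (1 + 1 / lam) * (min d b : ℕ) := by
  refine ⟨?_, ?_⟩ <;> unfold buyDay
  · rintro rfl
    split_ifs with hbh
    · rw [min_eq_right hbh.le]
      exact skiCost_ceil_mul_le_of_lt hlam0 hlam1 hb hbh
    · rw [min_eq_left (not_lt.mp hbh)]
      exact skiCost_ceil_div_le_of_le hlam0 hlam1 (not_lt.mp hbh)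
  · split_ifs
    · exact skiCost_ceil_mul_le hlam0 hlam1 hb
    · exact skiCost_ceil_div_le hlam0 hlam1 hb
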